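/- arXiv:2207.06378 — 7 statements merged into one kernel-verified Lean document; each statement's English description precedes it below -/
import Mathlib

section
/- Let a : J → [0,1] with J a finite nonempty index set, b ∈ [0,1], and S = { x : J → [0,1] : max_{j∈J} φ(a_j, x_j) = b }. Then S is nonempty if and only if (i) a_j ≤ b / w^(1/p) for all j ∈ J, and (ii) there exists j₀ ∈ J with b^p < 1 - w or a_{j₀} ≥ ((b^p + w - 1)/w)^(1/p). -/
/-!
Each `x ↦ φ(a, x)` is continuous and increasing on `[0,1]`, so it takes every value between
`φ(a, 0) = w^(1/p) a` and `φ(a, 1) = (w a^p + 1 - w)^(1/p)`. Hence the maximum can equal `b`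
exactly when every lower end is at most `b` (the maximum dominates each term) and some upper end
is at least `b` (the maximum is attained): put the coordinate of such an index at an
intermediate-value preimage of `b` and all other coordinates at `0`. Conditions (i) and (ii) are
these two inequalities solved for `a`.
-/

noncomputable def phi (w p a x : ℝ) : ℝ := (w * a ^ p + (1 - w) * x ^ p) ^ (1 / p)

open Set

theorem exists_sup'_eq_iff_of_monotoneOn_of_continuousOn
    {α δ J : Type*} [ConditionallyCompleteLinearOrder α] [TopologicalSpace α] [OrderTopology α]
    [DenselyOrdered α] [LinearOrder δ] [TopologicalSpace δ] [OrderClosedTopology δ]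
    [Fintype J] [Nonempty J] {l u : α} (hlu : l ≤ u) (f : J → α → δ)
    (hmono : ∀ j, MonotoneOn (f j) (Icc l u)) (hcont : ∀ j, ContinuousOn (f j) (Icc l u)) (b : δ) :
    (∃ x : J → α, (∀ j, x j ∈ Icc l u) ∧
        Finset.univ.sup' Finset.univ_nonempty (fun j => f j (x j)) = b) ↔
      (∀ j, f j l ≤ b) ∧ ∃ j₀, b ≤ f j₀ u := by
  have hl : l ∈ Icc l u := left_mem_Icc.2 hlu
  have hu : u ∈ Icc l u := right_mem_Icc.2 hlu
  constructor
  · rintro ⟨x, hx, rfl⟩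
    obtain ⟨j₀, -, hj₀⟩ :=
      Finset.exists_mem_eq_sup' Finset.univ_nonempty (fun j => f j (x j))
    refine ⟨fun j => ?_, j₀, ?_⟩
    · exact (hmono j hl (hx j) (hx j).1).trans
        (Finset.le_sup' (fun j => f j (x j)) (Finset.mem_univ j))
    · exact hj₀.le.trans (hmono j₀ (hx j₀) hu (hx j₀).2)
  · rintro ⟨hlow, j₀, hup⟩
    classical
    obtain ⟨y, hy, hfy⟩ := intermediate_value_Icc hlu (hcont j₀) ⟨hlow j₀, hup⟩
    refine ⟨Function.update (fun _ => l) j₀ y, fun j => ?_, le_antisymm ?_ ?_⟩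
    · rcases eq_or_ne j j₀ with rfl | hj
      · simpa using hy
      · simpa [hj] using hl
    · refine Finset.sup'_le _ _ fun j _ => ?_
      rcases eq_or_ne j j₀ with rfl | hj
      · simp [hfy]
      · simpa [hj] using hlow j
    · exact (Finset.le_sup' _ (Finset.mem_univ j₀)).trans_eq' (by simp [hfy])

section phi

variable {w p : ℝ}

theorem continuous_phi (hp : 0 < p) (a : ℝ) : Continuous (phi w p a) :=
  (continuous_const.add (continuous_const.mul (Real.continuous_rpow_const hp.le))).rpow_const
    fun _ => Or.inr (by positivity)

theorem monotoneOn_phi (hw : w ∈ Icc (0 : ℝ) 1) (hp : 0 < p) {a : ℝ} (ha : 0 ≤ a) :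
    MonotoneOn (phi w p a) (Ici 0) := by
  intro x hx y _ hxy
  have hw1 : 0 ≤ 1 - w := sub_nonneg.2 hw.2
  have hax : 0 ≤ w * a ^ p + (1 - w) * x ^ p :=
    add_nonneg (mul_nonneg hw.1 (Real.rpow_nonneg ha p)) (mul_nonneg hw1 (Real.rpow_nonneg hx p))
  exact Real.rpow_le_rpow hax (by gcongr) (by positivity)

theorem phi_zero (hw : 0 ≤ w) (hp : 0 < p) {a : ℝ} (ha : 0 ≤ a) :
    phi w p a 0 = w ^ (1 / p) * a := by
  rw [phi, Real.zero_rpow hp.ne', mul_zero, add_zero,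
    Real.mul_rpow hw (Real.rpow_nonneg ha p), one_div, Real.rpow_rpow_inv ha hp.ne']

theorem le_phi_one_iff (hw : w ∈ Ioc (0 : ℝ) 1) (hp : 0 < p) {a b : ℝ} (ha : 0 ≤ a)
    (hb : 0 ≤ b) :
    b ≤ phi w p a 1 ↔ b ^ p < 1 - w ∨ ((b ^ p + w - 1) / w) ^ (1 / p) ≤ a := by
  obtain ⟨hw0, hw1⟩ := hw
  have hap : 0 ≤ a ^ p := Real.rpow_nonneg ha p
  rw [phi, Real.one_rpow, mul_one, one_div,
    Real.le_rpow_inv_iff_of_pos hb (by nlinarith) hp]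
  rcases lt_or_ge (b ^ p) (1 - w) with hbw | hbw
  · simp only [hbw, true_or, iff_true]
    nlinarith
  · have hc : 0 ≤ (b ^ p + w - 1) / w := div_nonneg (by linarith) hw0.le
    rw [Real.rpow_inv_le_iff_of_pos hc ha hp, div_le_iff₀ hw0]
    simp only [not_lt.2 hbw, false_or]
    constructor <;> intro h <;> linarith

end phi

theorem stmt5 {J : Type*} [Fintype J] [Nonempty J] (w p : ℝ)
    (hw : w ∈ Set.Ioo (0:ℝ) 1) (hp : 0 < p)
    (a : J → ℝ) (ha : ∀ j, a j ∈ Set.Icc (0:ℝ) 1) (b : ℝ) (hb : b ∈ Set.Icc (0:ℝ) 1) :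
    (∃ x : J → ℝ, (∀ j, x j ∈ Set.Icc (0:ℝ) 1) ∧
        Finset.univ.sup' Finset.univ_nonempty (fun j => phi w p (a j) (x j)) = b) ↔
    ((∀ j, a j ≤ b / w ^ (1 / p)) ∧
      (∃ j₀, b ^ p < 1 - w ∨ ((b ^ p + w - 1) / w) ^ (1 / p) ≤ a j₀)) := by
  have hwp : 0 < w ^ (1 / p) := Real.rpow_pos_of_pos hw.1 _
  rw [exists_sup'_eq_iff_of_monotoneOn_of_continuousOn zero_le_one (fun j => phi w p (a j))
    (fun j => (monotoneOn_phi (Ioo_subset_Icc_self hw) hp (ha j).1).mono Icc_subset_Ici_self)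
    (fun j => (continuous_phi hp (a j)).continuousOn)]
  simp only [phi_zero hw.1.le hp (ha _).1, le_phi_one_iff (Ioo_subset_Ioc_self hw) hp (ha _).1 hb.1,
    le_div_iff₀' hwp]
end

section
/- Let a : J → [0,1], b ∈ [0,1], with J finite. Define J∞ = { j : b^p ≥ 1 - w and a_j < ((b^p + w - 1)/w)^(1/p) } and J' = { j : a_j ≤ b/w^(1/p) } \ J∞ (assuming a_j ≤ b/w^(1/p) for all j, so J' = J \ J∞). A point x ∈ [0,1]^J satisfies max_j φ(a_j, x_j) = b if and only if J' ≠ ∅, x_j ≤ ((b^p - w·a_j^p)/(1-w))^(1/p) for all j ∈ J', and there exists j₀ ∈ J' with x_{j₀} = ((b^p - w·a_{j₀}^p)/(1-w))^(1/p). -/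
/-!
Raising to the power `p` is an order isomorphism of `[0, ∞)`, so `φ(a_j, x_j) ≤ b` and
`φ(a_j, x_j) = b` become `w a_jᵖ + (1 - w) x_jᵖ ≤ bᵖ` and `= bᵖ`, i.e. `x_j ≤ B_j` and `x_j = B_j`
for the bound `B_j = ((bᵖ - w a_jᵖ) / (1 - w))^(1/p)`, which is well defined because
`w a_jᵖ ≤ bᵖ`. The condition defining `J'` says exactly that `bᵖ ≤ w a_jᵖ + (1 - w)`, the value of
`w a_jᵖ + (1 - w) x_jᵖ` at `x_j = 1`; outside `J'` the constraint `φ(a_j, x_j) ≤ b` is therefore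
automatic, and an index where the maximum is attained always lies in `J'`.
-/

open Finset

theorem Finset.sup'_eq_iff {ι α : Type*} [LinearOrder α] {s : Finset ι} (H : s.Nonempty)
    {f : ι → α} {b : α} : s.sup' H f = b ↔ (∀ j ∈ s, f j ≤ b) ∧ ∃ j ∈ s, f j = b := by
  rw [le_antisymm_iff, sup'_le_iff, le_sup'_iff]
  refine and_congr_right fun hle => exists_congr fun j => and_congr_right fun hj => ?_
  exact ⟨fun h => le_antisymm (hle j hj) h, ge_of_eq⟩

theorem forall_le_and_exists_eq_iff {ι α : Type*} [LinearOrder α] {I M : ι → α} {B : α}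
    (hIM : ∀ j, I j ≤ M j) :
    ((∀ j, I j ≤ B) ∧ ∃ j, I j = B) ↔
      (∃ j, B ≤ M j) ∧ (∀ j, B ≤ M j → I j ≤ B) ∧ ∃ j, B ≤ M j ∧ I j = B := by
  constructor
  · rintro ⟨hle, j, hj⟩
    have hM : B ≤ M j := hj ▸ hIM j
    exact ⟨⟨j, hM⟩, fun k _ => hle k, j, hM, hj⟩
  · rintro ⟨-, hle, j, hM, hj⟩
    refine ⟨fun k => ?_, j, hj⟩
    rcases le_or_gt B (M k) with hk | hk
    · exact hle k hk
    · exact (hIM k).trans hk.le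

section Phi

variable {w p a x b : ℝ}

theorem phi_le_iff (hp : 0 < p) (hb : 0 ≤ b) (h : 0 ≤ w * a ^ p + (1 - w) * x ^ p) :
    phi w p a x ≤ b ↔ w * a ^ p + (1 - w) * x ^ p ≤ b ^ p := by
  rw [phi, one_div, Real.rpow_inv_le_iff_of_pos h hb hp]

theorem phi_eq_iff (hp : 0 < p) (hb : 0 ≤ b) (h : 0 ≤ w * a ^ p + (1 - w) * x ^ p) :
    phi w p a x = b ↔ w * a ^ p + (1 - w) * x ^ p = b ^ p := by
  rw [phi, one_div, Real.rpow_inv_eq h hb hp.ne']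

theorem mul_rpow_le_rpow_of_le_div (hw : 0 < w) (hp : 0 < p) (ha : 0 ≤ a) (hb : 0 ≤ b)
    (h : a ≤ b / w ^ (1 / p)) : w * a ^ p ≤ b ^ p := by
  have hwp : (w ^ (1 / p)) ^ p = w := by rw [one_div, Real.rpow_inv_rpow hw.le hp.ne']
  calc w * a ^ p ≤ w * (b / w ^ (1 / p)) ^ p := by gcongr
    _ = b ^ p := by
      rw [Real.div_rpow hb (by positivity), hwp, mul_div_cancel₀ _ hw.ne']

theorem le_rpow_one_div_iff (hw : w < 1) (hp : 0 < p) (hx : 0 ≤ x) (hab : w * a ^ p ≤ b ^ p) :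
    x ≤ ((b ^ p - w * a ^ p) / (1 - w)) ^ (1 / p) ↔ w * a ^ p + (1 - w) * x ^ p ≤ b ^ p := by
  have hw' : 0 < 1 - w := sub_pos.2 hw
  rw [one_div, Real.le_rpow_inv_iff_of_pos hx (div_nonneg (sub_nonneg.2 hab) hw'.le) hp,
    le_div_iff₀ hw']
  constructor <;> intro h <;> linarith

theorem eq_rpow_one_div_iff (hw : w < 1) (hp : 0 < p) (hx : 0 ≤ x) (hab : w * a ^ p ≤ b ^ p) :
    x = ((b ^ p - w * a ^ p) / (1 - w)) ^ (1 / p) ↔ w * a ^ p + (1 - w) * x ^ p = b ^ p := by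
  have hw' : 0 < 1 - w := sub_pos.2 hw
  rw [one_div, Real.eq_rpow_inv hx (div_nonneg (sub_nonneg.2 hab) hw'.le) hp.ne',
    eq_div_iff hw'.ne']
  constructor <;> intro h <;> linarith

/-- The membership condition of `J'`, with `c = bᵖ`. -/
theorem lt_one_sub_or_rpow_one_div_le_iff (hw : 0 < w) (hp : 0 < p) (ha : 0 ≤ a) (c : ℝ) :
    (c < 1 - w ∨ ((c + w - 1) / w) ^ (1 / p) ≤ a) ↔ c ≤ w * a ^ p + (1 - w) := by
  have hwa : 0 ≤ w * a ^ p := by positivity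
  rcases lt_or_ge c (1 - w) with hc | hc
  · exact iff_of_true (Or.inl hc) (by linarith)
  · rw [or_iff_right hc.not_gt, one_div,
      Real.rpow_inv_le_iff_of_pos (div_nonneg (by linarith) hw.le) ha hp, div_le_iff₀ hw]
    constructor <;> intro h <;> linarith

end Phi

theorem stmt6 {J : Type*} [Fintype J] [Nonempty J] (w p : ℝ)
    (hw : w ∈ Set.Ioo (0:ℝ) 1) (hp : 0 < p)
    (a : J → ℝ) (ha : ∀ j, a j ∈ Set.Icc (0:ℝ) 1) (b : ℝ) (hb : b ∈ Set.Icc (0:ℝ) 1)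
    (hA : ∀ j, a j ≤ b / w ^ (1 / p)) :
    ∀ x : J → ℝ, (∀ j, x j ∈ Set.Icc (0:ℝ) 1) →
      (Finset.univ.sup' Finset.univ_nonempty (fun j => phi w p (a j) (x j)) = b ↔
        ((∃ j, b ^ p < 1 - w ∨ ((b ^ p + w - 1) / w) ^ (1 / p) ≤ a j) ∧
         (∀ j, (b ^ p < 1 - w ∨ ((b ^ p + w - 1) / w) ^ (1 / p) ≤ a j) →
            x j ≤ ((b ^ p - w * (a j) ^ p) / (1 - w)) ^ (1 / p)) ∧
         (∃ j₀, (b ^ p < 1 - w ∨ ((b ^ p + w - 1) / w) ^ (1 / p) ≤ a j₀) ∧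
            x j₀ = ((b ^ p - w * (a j₀) ^ p) / (1 - w)) ^ (1 / p)))) := by
  intro x hx
  have hwa j : w * a j ^ p ≤ b ^ p :=
    mul_rpow_le_rpow_of_le_div hw.1 hp (ha j).1 hb.1 (hA j)
  have hI j : 0 ≤ w * a j ^ p + (1 - w) * x j ^ p :=
    add_nonneg (mul_nonneg hw.1.le (Real.rpow_nonneg (ha j).1 p))
      (mul_nonneg (sub_pos.2 hw.2).le (Real.rpow_nonneg (hx j).1 p))
  have hIM j : w * a j ^ p + (1 - w) * x j ^ p ≤ w * a j ^ p + (1 - w) := by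
    have := mul_le_of_le_one_right (sub_pos.2 hw.2).le
      (Real.rpow_le_one (hx j).1 (hx j).2 hp.le)
    linarith
  have hle j := phi_le_iff (w := w) (a := a j) (x := x j) hp hb.1 (hI j)
  have heq j := phi_eq_iff (w := w) (a := a j) (x := x j) hp hb.1 (hI j)
  have hJ' j := lt_one_sub_or_rpow_one_div_le_iff hw.1 hp (ha j).1 (b ^ p)
  have hBle j := le_rpow_one_div_iff hw.2 hp (hx j).1 (hwa j)
  have hBeq j := eq_rpow_one_div_iff hw.2 hp (hx j).1 (hwa j)
  simp only [Finset.sup'_eq_iff, mem_univ, true_implies, true_and, hle, heq, hJ', hBle, hBeq]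
  exact forall_le_and_exists_eq_iff hIM
end

section
/- Let S = { x ∈ [0,1]^J : max_j φ(a_j,x_j) = b } be nonempty. With X̄ the maximum solution and X(j) the minimal solution concentrated at j ∈ J' (as defined via the WPM inverse ((b^p - w·a_j^p)/(1-w))^(1/p)), one has S = ⋃_{j ∈ J'} [X(j), X̄], where [u,v] denotes the componentwise order interval { x : u ≤ x ≤ v }. -/
/-!
Each `phi w p (a j)` is strictly increasing on `[0, ∞)` and takes the value `b` exactly at the
WPM inverse `wpmInv w p (a j) b`. Hence `x ∈ [0,1]^J` solves `max_j φ(a_j, x_j) = b` iff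
`x_j ≤ min (wpmInv w p (a j) b) 1` for all `j` and equality `x_j = wpmInv w p (a j) b` holds for
some `j`, which forces `wpmInv w p (a j) b ≤ 1`; these are exactly the points of the intervals
`[X(j), X̄]`. The condition defining `J'` is an unfolded form of `wpmInv w p (a j) b ≤ 1`.
-/

open scoped Classical

theorem setOf_sup'_eq_eq_iUnion_Icc {J β : Type*} [Fintype J] [Nonempty J] [LinearOrder β]
    (f : J → ℝ → β) (U : J → ℝ) (b : β) (hf : ∀ j, StrictMonoOn (f j) (Set.Ici 0))
    (hU : ∀ j, 0 ≤ U j) (hfU : ∀ j, f j (U j) = b) :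
    {x : J → ℝ | (∀ j, x j ∈ Set.Icc (0:ℝ) 1) ∧
        Finset.univ.sup' Finset.univ_nonempty (fun j => f j (x j)) = b} =
      ⋃ j ∈ {j | U j ≤ 1},
        Set.Icc (fun k => if k = j then min (U j) 1 else 0) (fun k => min (U k) 1) := by
  ext x
  simp only [Set.mem_ofPred_eq, Set.mem_iUnion, Set.mem_Icc, exists_prop]
  constructor
  · rintro ⟨hx, hsup⟩
    have hle : ∀ k, x k ≤ U k := fun k =>
      ((hf k).le_iff_le (hx k).1 (hU k)).1 <| by
        rw [hfU, ← hsup]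
        exact Finset.le_sup' (fun j => f j (x j)) (Finset.mem_univ k)
    obtain ⟨j, -, hj⟩ := Finset.exists_mem_eq_sup' Finset.univ_nonempty (fun j => f j (x j))
    have hxj : x j = U j := (hf j).injOn (hx j).1 (hU j) (by rw [hfU, ← hj, hsup])
    refine ⟨j, hxj ▸ (hx j).2, fun k => ?_, fun k => le_min (hle k) (hx k).2⟩
    dsimp only
    split_ifs with hk
    · subst hk
      exact (min_le_left _ _).trans hxj.ge
    · exact (hx k).1
  · rintro ⟨j, hj1, hlo, hhi⟩
    have hxj : x j = U j := by
      have := hlo j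
      simp only [if_pos, min_eq_left hj1] at this
      exact le_antisymm ((hhi j).trans (min_le_left _ _)) this
    have hx0 : ∀ k, 0 ≤ x k := fun k => by
      by_cases hk : k = j
      · exact hk ▸ hxj ▸ hU j
      · simpa only [if_neg hk] using hlo k
    refine ⟨fun k => ⟨hx0 k, (hhi k).trans (min_le_right _ _)⟩, le_antisymm ?_ ?_⟩
    · refine Finset.sup'_le _ _ fun k _ => ?_
      exact hfU k ▸ (hf k).monotoneOn (hx0 k) (hU k) ((hhi k).trans (min_le_left _ _))
    · rw [← hfU j, ← hxj]
      exact Finset.le_sup' (fun j => f j (x j)) (Finset.mem_univ j)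

noncomputable def wpmInv (w p a b : ℝ) : ℝ := ((b ^ p - w * a ^ p) / (1 - w)) ^ (1 / p)

section

variable {w p a b : ℝ}

theorem mul_rpow_le_of_le_div_rpow (hw : 0 < w) (hp : 0 < p) (ha : 0 ≤ a)
    (h : a ≤ b / w ^ (1 / p)) : w * a ^ p ≤ b ^ p := by
  have hwp : 0 < w ^ (1 / p) := Real.rpow_pos_of_pos hw _
  have h' : (a * w ^ (1 / p)) ^ p ≤ b ^ p :=
    Real.rpow_le_rpow (by positivity) ((le_div_iff₀ hwp).1 h) hp.le
  rwa [Real.mul_rpow ha hwp.le, one_div, Real.rpow_inv_rpow hw.le hp.ne', mul_comm] at h'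

theorem phi_strictMonoOn (hw0 : 0 ≤ w) (hw1 : w < 1) (hp : 0 < p) (ha : 0 ≤ a) :
    StrictMonoOn (phi w p a) (Set.Ici 0) := by
  intro s hs t _ hst
  have hs' : 0 ≤ w * a ^ p + (1 - w) * s ^ p := by
    have := Real.rpow_nonneg ha p
    have := Real.rpow_nonneg (Set.mem_Ici.1 hs) p
    have : 0 < 1 - w := by linarith
    positivity
  have hst' : s ^ p < t ^ p := Real.rpow_lt_rpow hs hst hp
  refine Real.rpow_lt_rpow hs' ?_ (by positivity)
  gcongr

theorem wpmInv_nonneg (hw : w < 1) (hab : w * a ^ p ≤ b ^ p) : 0 ≤ wpmInv w p a b :=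
  Real.rpow_nonneg (div_nonneg (sub_nonneg.2 hab) (sub_pos.2 hw).le) _

theorem phi_wpmInv (hw : w < 1) (hp : 0 < p) (hb : 0 ≤ b) (hab : w * a ^ p ≤ b ^ p) :
    phi w p a (wpmInv w p a b) = b := by
  have hc : 0 ≤ (b ^ p - w * a ^ p) / (1 - w) := div_nonneg (sub_nonneg.2 hab) (sub_pos.2 hw).le
  have hinner : w * a ^ p + (1 - w) * ((b ^ p - w * a ^ p) / (1 - w)) = b ^ p := by
    field_simp [(sub_pos.2 hw).ne']
    ring
  rw [phi, wpmInv, one_div, Real.rpow_inv_rpow hc hp.ne', hinner, Real.rpow_rpow_inv hb hp.ne']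

theorem wpmInv_le_one_iff (hw0 : 0 < w) (hw1 : w < 1) (hp : 0 < p) (ha : 0 ≤ a)
    (hab : w * a ^ p ≤ b ^ p) :
    wpmInv w p a b ≤ 1 ↔ b ^ p < 1 - w ∨ ((b ^ p + w - 1) / w) ^ (1 / p) ≤ a := by
  have hc : 0 ≤ (b ^ p - w * a ^ p) / (1 - w) := div_nonneg (sub_nonneg.2 hab) (sub_pos.2 hw1).le
  have hwa : 0 ≤ w * a ^ p := mul_nonneg hw0.le (Real.rpow_nonneg ha p)
  rw [wpmInv, one_div, Real.rpow_inv_le_iff_of_pos hc zero_le_one hp, Real.one_rpow,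
    div_le_one (sub_pos.2 hw1)]
  rcases lt_or_ge (b ^ p) (1 - w) with hb | hb
  · simp only [hb, true_or, iff_true]
    linarith
  · have ht : 0 ≤ (b ^ p + w - 1) / w := div_nonneg (by linarith) hw0.le
    rw [Real.rpow_inv_le_iff_of_pos ht ha hp, div_le_iff₀ hw0]
    simp only [not_lt.2 hb, false_or]
    constructor <;> intro h <;> linarith

end

theorem stmt9_general {J : Type*} [Fintype J] [Nonempty J] (w p : ℝ)
    (hw : w ∈ Set.Ioo (0:ℝ) 1) (hp : 0 < p)
    (a : J → ℝ) (ha : ∀ j, a j ∈ Set.Icc (0:ℝ) 1) (b : ℝ) (hb : b ∈ Set.Icc (0:ℝ) 1)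
    (hA : ∀ j, a j ≤ b / w ^ (1 / p))
    (S : Set (J → ℝ))
    (hS : S = {x : J → ℝ | (∀ j, x j ∈ Set.Icc (0:ℝ) 1) ∧
        Finset.univ.sup' Finset.univ_nonempty (fun j => phi w p (a j) (x j)) = b})
    (Xbar : J → ℝ)
    (hXbar : ∀ j, Xbar j =
      if b ^ p < 1 - w ∨ ((b ^ p + w - 1) / w) ^ (1 / p) ≤ a j
      then ((b ^ p - w * (a j) ^ p) / (1 - w)) ^ (1 / p) else 1) :
    S = ⋃ j ∈ {j : J | b ^ p < 1 - w ∨ ((b ^ p + w - 1) / w) ^ (1 / p) ≤ a j},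
          Set.Icc (fun k => if k = j then Xbar j else 0) Xbar := by
  obtain ⟨hw0, hw1⟩ := hw
  have hab : ∀ j, w * a j ^ p ≤ b ^ p := fun j =>
    mul_rpow_le_of_le_div_rpow hw0 hp (ha j).1 (hA j)
  have hJ' : ∀ j, (b ^ p < 1 - w ∨ ((b ^ p + w - 1) / w) ^ (1 / p) ≤ a j) ↔
      wpmInv w p (a j) b ≤ 1 := fun j =>
    (wpmInv_le_one_iff hw0 hw1 hp (ha j).1 (hab j)).symm
  have hXbar_min : Xbar = fun j => min (wpmInv w p (a j) b) 1 := funext fun j => by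
    rw [hXbar, min_def]
    exact if_congr (hJ' j) rfl rfl
  rw [Set.ext hJ', hXbar_min, hS]
  exact setOf_sup'_eq_eq_iUnion_Icc _ _ b
    (fun j => phi_strictMonoOn hw0.le hw1 hp (ha j).1) (fun j => wpmInv_nonneg hw1 (hab j))
    (fun j => phi_wpmInv hw1 hp hb.1 (hab j))

theorem stmt9 {J : Type*} [Fintype J] [Nonempty J] (w p : ℝ)
    (hw : w ∈ Set.Ioo (0:ℝ) 1) (hp : 0 < p)
    (a : J → ℝ) (ha : ∀ j, a j ∈ Set.Icc (0:ℝ) 1) (b : ℝ) (hb : b ∈ Set.Icc (0:ℝ) 1)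
    (hA : ∀ j, a j ≤ b / w ^ (1 / p))
    (S : Set (J → ℝ))
    (hS : S = {x : J → ℝ | (∀ j, x j ∈ Set.Icc (0:ℝ) 1) ∧
        Finset.univ.sup' Finset.univ_nonempty (fun j => phi w p (a j) (x j)) = b})
    (hne : S.Nonempty)
    (Xbar : J → ℝ)
    (hXbar : ∀ j, Xbar j =
      if b ^ p < 1 - w ∨ ((b ^ p + w - 1) / w) ^ (1 / p) ≤ a j
      then ((b ^ p - w * (a j) ^ p) / (1 - w)) ^ (1 / p) else 1) :
    S = ⋃ j ∈ {j : J | b ^ p < 1 - w ∨ ((b ^ p + w - 1) / w) ^ (1 / p) ≤ a j},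
          Set.Icc (fun k => if k = j then Xbar j else 0) Xbar :=
  stmt9_general w p hw hp a ha b hb hA S hS Xbar hXbar
end

section
/- Let S(A,b) = ⋂_{i∈I} S(a_i,b_i) where each S(a_i,b_i) = ⋃_{j∈J(i)} [X(i,j), X̄(i)] is nonempty, and let X̄ = min_{i∈I} X̄(i) componentwise. Then S(A,b) ≠ ∅ if and only if X̄ ∈ S(A,b). -/
lemma phi_mono_aux (w p a : ℝ) (hw : w ∈ Set.Ioo (0:ℝ) 1) (hp : 0 < p) (ha : 0 ≤ a)
    {x y : ℝ} (hx : 0 ≤ x) (hxy : x ≤ y) : phi w p a x ≤ phi w p a y := by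
  have hw1 : 0 ≤ 1 - w := by linarith [hw.2]
  have h1 : (0:ℝ) ≤ w * a ^ p + (1 - w) * x ^ p := by
    have := Real.rpow_nonneg ha p
    have := Real.rpow_nonneg hx p
    nlinarith [hw.1.le]
  have h2 : w * a ^ p + (1 - w) * x ^ p ≤ w * a ^ p + (1 - w) * y ^ p := by
    have := Real.rpow_le_rpow hx hxy hp.le
    nlinarith
  exact Real.rpow_le_rpow h1 h2 (by positivity)

theorem stmt11 {I J : Type*} [Fintype I] [Nonempty I] [Fintype J] [Nonempty J]
    (w p : ℝ) (hw : w ∈ Set.Ioo (0:ℝ) 1) (hp : 0 < p)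
    (A : I → J → ℝ) (hA : ∀ i j, A i j ∈ Set.Icc (0:ℝ) 1)
    (b : I → ℝ) (hb : ∀ i, b i ∈ Set.Icc (0:ℝ) 1)
    (S : I → Set (J → ℝ))
    (hS : ∀ i, S i = {x : J → ℝ | (∀ j, x j ∈ Set.Icc (0:ℝ) 1) ∧
        Finset.univ.sup' Finset.univ_nonempty (fun j => phi w p (A i j) (x j)) = b i})
    (hne : ∀ i, (S i).Nonempty)
    (Xbari : I → (J → ℝ))
    (hmax : ∀ i, Xbari i ∈ S i ∧ ∀ x ∈ S i, x ≤ Xbari i) :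
    (⋂ i, S i).Nonempty ↔ (fun j => ⨅ i, Xbari i j) ∈ ⋂ i, S i := by
  constructor
  · rintro ⟨x, hx⟩
    simp only [Set.mem_iInter] at hx ⊢
    intro i
    have hxi := hx i
    have hXi := (hmax i).1
    rw [hS i] at hxi hXi ⊢
    set X : J → ℝ := fun j => ⨅ k, Xbari k j with hXdef
    have hle : ∀ j, x j ≤ X j := fun j =>
      le_ciInf fun k => ((hmax k).2 x (hx k)) j
    have hge : ∀ j, X j ≤ Xbari i j := fun j =>
      ciInf_le (Set.Finite.bddBelow (Set.finite_range _)) i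
    have hX0 : ∀ j, 0 ≤ X j := fun j => le_trans (hxi.1 j).1 (hle j)
    constructor
    · intro j
      exact ⟨hX0 j, le_trans (hge j) (hXi.1 j).2⟩
    · apply le_antisymm
      · rw [← hXi.2]
        apply Finset.sup'_le
        intro j _
        exact le_trans (phi_mono_aux w p (A i j) hw hp (hA i j).1 (hX0 j) (hge j))
          (Finset.le_sup' (fun j => phi w p (A i j) (Xbari i j)) (Finset.mem_univ j))
      · rw [← hxi.2]
        apply Finset.sup'_le
        intro j _
        exact le_trans (phi_mono_aux w p (A i j) hw hp (hA i j).1 (hxi.1 j).1 (hle j))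
          (Finset.le_sup' (fun j => phi w p (A i j) (X j)) (Finset.mem_univ j))
  · intro h
    exact ⟨_, h⟩
end

section
/- If b_i^p ≥ 1 - w and a_{i j₀} < ((b_i^p + w - 1)/w)^(1/p) (i.e., j₀ ∈ J∞(i)), then setting a_{i j₀} := 0 does not change the solution set S(A,b) of the system { x ∈ [0,1]^J : ∀i, max_j φ(a_ij,x_j) = b_i }. -/
open scoped Classical

lemma sup'_swap {J : Type*} [Fintype J] [Nonempty J] (f g : J → ℝ) (j₀ : J) (b : ℝ)
    (hf : f j₀ < b) (hg : g j₀ < b) (heq : ∀ j, j ≠ j₀ → f j = g j)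
    (hsup : Finset.univ.sup' Finset.univ_nonempty f = b) :
    Finset.univ.sup' Finset.univ_nonempty g = b := by
  apply le_antisymm
  · apply Finset.sup'_le
    intro j _
    by_cases hj : j = j₀
    · subst hj; exact hg.le
    · rw [← heq j hj, ← hsup]
      exact Finset.le_sup' f (Finset.mem_univ j)
  · obtain ⟨j, _, hj⟩ := Finset.exists_mem_eq_sup'
      (Finset.univ_nonempty : (Finset.univ : Finset J).Nonempty) f
    have hjne : j ≠ j₀ := by
      intro h; subst h; rw [hsup] at hj; exact absurd hj.symm (ne_of_lt hf)
    calc b = f j := by rw [← hsup, hj]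
    _ = g j := heq j hjne
    _ ≤ _ := Finset.le_sup' g (Finset.mem_univ j)

theorem stmt13 {I J : Type*} [Fintype I] [Fintype J] [Nonempty J]
    (w p : ℝ) (hw : w ∈ Set.Ioo (0:ℝ) 1) (hp : 0 < p)
    (A : I → J → ℝ) (hA : ∀ i j, A i j ∈ Set.Icc (0:ℝ) 1)
    (b : I → ℝ) (hb : ∀ i, b i ∈ Set.Icc (0:ℝ) 1)
    (i₀ : I) (j₀ : J)
    (h1 : 1 - w ≤ b i₀ ^ p)
    (h2 : A i₀ j₀ < ((b i₀ ^ p + w - 1) / w) ^ (1 / p))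
    (A' : I → J → ℝ)
    (hA' : A' = fun i j => if i = i₀ ∧ j = j₀ then 0 else A i j) :
    {x : J → ℝ | (∀ j, x j ∈ Set.Icc (0:ℝ) 1) ∧
        ∀ i, Finset.univ.sup' Finset.univ_nonempty (fun j => phi w p (A i j) (x j)) = b i} =
    {x : J → ℝ | (∀ j, x j ∈ Set.Icc (0:ℝ) 1) ∧
        ∀ i, Finset.univ.sup' Finset.univ_nonempty (fun j => phi w p (A' i j) (x j)) = b i} := by
  obtain ⟨hw0, hw1⟩ := hw
  have hb0 : 0 ≤ b i₀ := (hb i₀).1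
  have hp' : 0 < 1 / p := by positivity
  have hA0 : 0 ≤ A i₀ j₀ := (hA i₀ j₀).1
  have hrge : 0 ≤ (b i₀ ^ p + w - 1) / w := by
    apply div_nonneg _ hw0.le; linarith
  have hrpos : 0 < (b i₀ ^ p + w - 1) / w := by
    rcases lt_or_eq_of_le hrge with h | h
    · exact h
    · exfalso
      rw [← h, Real.zero_rpow (ne_of_gt hp')] at h2
      exact absurd (lt_of_le_of_lt hA0 h2) (lt_irrefl 0)
  have hstrict : 1 - w < b i₀ ^ p := by
    have : 0 < b i₀ ^ p + w - 1 := by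
      rcases div_pos_iff.mp hrpos with ⟨h, _⟩ | ⟨_, h⟩
      · exact h
      · linarith
    linarith
  -- key bounds
  have key : ∀ x : ℝ, x ∈ Set.Icc (0:ℝ) 1 →
      phi w p (A i₀ j₀) x < b i₀ ∧ phi w p 0 x < b i₀ := by
    intro x hx
    have hxp : x ^ p ≤ 1 := by
      calc x ^ p ≤ 1 ^ p := Real.rpow_le_rpow hx.1 hx.2 hp.le
      _ = 1 := Real.one_rpow p
    have hxp0 : 0 ≤ x ^ p := Real.rpow_nonneg hx.1 p
    have hap : A i₀ j₀ ^ p < (b i₀ ^ p + w - 1) / w := by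
      have := Real.rpow_lt_rpow hA0 h2 hp
      rwa [← Real.rpow_mul hrge, one_div_mul_cancel (ne_of_gt hp), Real.rpow_one] at this
    have haux : ∀ s : ℝ, 0 ≤ s → s < b i₀ ^ p → s ^ (1/p) < b i₀ := by
      intro s hs0 hs
      have := Real.rpow_lt_rpow hs0 hs hp'
      rwa [← Real.rpow_mul hb0, mul_one_div_cancel (ne_of_gt hp), Real.rpow_one] at this
    constructor
    · apply haux
      · have := Real.rpow_nonneg hA0 p
        nlinarith
      · have : w * (A i₀ j₀ ^ p) < w * ((b i₀ ^ p + w - 1) / w) :=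
          (mul_lt_mul_iff_right₀ hw0).mpr hap
        rw [mul_div_cancel₀ _ (ne_of_gt hw0)] at this
        nlinarith
    · apply haux
      · have h0p : (0:ℝ) ^ p = 0 := Real.zero_rpow (ne_of_gt hp)
        nlinarith [Real.rpow_nonneg (le_refl (0:ℝ)) p]
      · rw [Real.zero_rpow (ne_of_gt hp), mul_zero, zero_add]
        nlinarith
  ext x
  simp only [Set.mem_setOf_eq]
  constructor
  · rintro ⟨hx, hsup⟩
    refine ⟨hx, fun i => ?_⟩
    by_cases hi : i = i₀
    · rw [hi]
      apply sup'_swap (fun j => phi w p (A i₀ j) (x j)) _ j₀ _ (key _ (hx j₀)).1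
      · have hz : A' i₀ j₀ = 0 := by rw [hA']; simp
        simpa [hz] using (key _ (hx j₀)).2
      · intro j hj
        simp only [hA']
        rw [if_neg (by tauto)]
      · exact hsup i₀
    · have : ∀ j, A' i j = A i j := by
        intro j; rw [hA']; exact if_neg (by tauto)
      simp only [this]
      exact hsup i
  · rintro ⟨hx, hsup⟩
    refine ⟨hx, fun i => ?_⟩
    by_cases hi : i = i₀
    · rw [hi]
      apply sup'_swap (fun j => phi w p (A' i₀ j) (x j)) _ j₀ _ ?_ (key _ (hx j₀)).1
      · intro j hj
        simp only [hA']
        rw [if_neg (by tauto)]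
      · exact hsup i₀
      · have hz : A' i₀ j₀ = 0 := by rw [hA']; simp
        simpa [hz] using (key _ (hx j₀)).2
    · have : ∀ j, A' i j = A i j := by
        intro j; rw [hA']; exact if_neg (by tauto)
      simp only [← this]
      exact hsup i
end

section
/- Suppose j₀ ∈ J(k) and there exists i ≠ k with j₀ ∈ J(i) and b_i^p - b_k^p < w·(a_{i j₀}^p - a_{k j₀}^p). Then for every x ∈ S(A,b), φ(a_{k j₀}, x_{j₀}) < b_k; consequently, setting a_{k j₀} := 0 is an equivalence operation (it does not change S(A,b)). -/
open scoped Classical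

theorem stmt14 {I J : Type*} [Fintype I] [Fintype J] [Nonempty J]
    (w p : ℝ) (hw : w ∈ Set.Ioo (0:ℝ) 1) (hp : 0 < p)
    (A : I → J → ℝ) (hA : ∀ i j, A i j ∈ Set.Icc (0:ℝ) 1)
    (b : I → ℝ) (hb : ∀ i, b i ∈ Set.Icc (0:ℝ) 1)
    (k : I) (j₀ : J)
    (hk : A k j₀ ≤ b k / w ^ (1 / p) ∧
      (b k ^ p < 1 - w ∨ ((b k ^ p + w - 1) / w) ^ (1 / p) ≤ A k j₀))
    (i : I) (hik : i ≠ k)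
    (hi : A i j₀ ≤ b i / w ^ (1 / p) ∧
      (b i ^ p < 1 - w ∨ ((b i ^ p + w - 1) / w) ^ (1 / p) ≤ A i j₀))
    (hlt : b i ^ p - b k ^ p < w * ((A i j₀) ^ p - (A k j₀) ^ p))
    (A' : I → J → ℝ)
    (hA' : A' = fun i' j => if i' = k ∧ j = j₀ then 0 else A i' j) :
    (∀ x : J → ℝ, (∀ j, x j ∈ Set.Icc (0:ℝ) 1) →
      (∀ i', Finset.univ.sup' Finset.univ_nonempty (fun j => phi w p (A i' j) (x j)) = b i') →
      phi w p (A k j₀) (x j₀) < b k) ∧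
    ({x : J → ℝ | (∀ j, x j ∈ Set.Icc (0:ℝ) 1) ∧
        ∀ i', Finset.univ.sup' Finset.univ_nonempty (fun j => phi w p (A i' j) (x j)) = b i'} =
     {x : J → ℝ | (∀ j, x j ∈ Set.Icc (0:ℝ) 1) ∧
        ∀ i', Finset.univ.sup' Finset.univ_nonempty (fun j => phi w p (A' i' j) (x j)) = b i'}) := by
  obtain ⟨hw0, hw1⟩ := hw
  have hp' : p ≠ 0 := hp.ne'
  have hbk0 : (0:ℝ) ≤ b k := (hb k).1
  -- key pointwise lemma
  have key : ∀ x0 : ℝ, 0 ≤ x0 → phi w p (A i j₀) x0 ≤ b i →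
      phi w p (A k j₀) x0 < b k := by
    intro x0 hx0 hle
    have hai := (hA i j₀).1
    have hak := (hA k j₀).1
    have hti : (0:ℝ) ≤ w * (A i j₀) ^ p + (1 - w) * x0 ^ p :=
      add_nonneg (mul_nonneg hw0.le (Real.rpow_nonneg hai p))
        (mul_nonneg (by linarith) (Real.rpow_nonneg hx0 p))
    have htk : (0:ℝ) ≤ w * (A k j₀) ^ p + (1 - w) * x0 ^ p :=
      add_nonneg (mul_nonneg hw0.le (Real.rpow_nonneg hak p))
        (mul_nonneg (by linarith) (Real.rpow_nonneg hx0 p))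
    have h1 : w * (A i j₀) ^ p + (1 - w) * x0 ^ p ≤ (b i) ^ p := by
      have := Real.rpow_le_rpow (Real.rpow_nonneg hti (1/p)) hle hp.le
      rwa [one_div, Real.rpow_inv_rpow hti hp'] at this
    have h2 : w * (A k j₀) ^ p + (1 - w) * x0 ^ p < (b k) ^ p := by linarith
    have hbkpos : 0 < b k := by
      rcases eq_or_lt_of_le hbk0 with h | h
      · exfalso
        rw [← h, Real.zero_rpow hp'] at h2
        linarith
      · exact h
    calc phi w p (A k j₀) x0
        = (w * (A k j₀) ^ p + (1 - w) * x0 ^ p) ^ (1/p) := rfl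
      _ < ((b k) ^ p) ^ (1/p) :=
          Real.rpow_lt_rpow htk h2 (by positivity)
      _ = b k := by rw [one_div, Real.rpow_rpow_inv hbk0 hp']
  -- monotonicity at 0
  have phi_zero_le : ∀ a x0 : ℝ, 0 ≤ a → 0 ≤ x0 → phi w p 0 x0 ≤ phi w p a x0 := by
    intro a x0 ha hx0
    unfold phi
    apply Real.rpow_le_rpow
    · rw [Real.zero_rpow hp']
      have h1 : (0:ℝ) ≤ (1 - w) * x0 ^ p :=
        mul_nonneg (by linarith) (Real.rpow_nonneg hx0 p)
      linarith
    · have h2 : (0:ℝ) ≤ w * a ^ p := mul_nonneg hw0.le (Real.rpow_nonneg ha p)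
      rw [Real.zero_rpow hp']
      linarith
    · positivity
  have hA'kj0 : A' k j₀ = 0 := by rw [hA']; simp
  have part1 : ∀ x : J → ℝ, (∀ j, x j ∈ Set.Icc (0:ℝ) 1) →
      (∀ i', Finset.univ.sup' Finset.univ_nonempty (fun j => phi w p (A i' j) (x j)) = b i') →
      phi w p (A k j₀) (x j₀) < b k := by
    intro x hx hsol
    apply key (x j₀) (hx j₀).1
    rw [← hsol i]
    exact Finset.le_sup' (fun j => phi w p (A i j) (x j)) (Finset.mem_univ j₀)
  refine ⟨part1, ?_⟩
  ext x
  simp only [Set.mem_setOf_eq]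
  constructor
  · rintro ⟨hx, hsol⟩
    refine ⟨hx, fun i' => ?_⟩
    by_cases hi' : i' = k
    · rw [hi']
      have hlt0 : phi w p (A k j₀) (x j₀) < b k := part1 x hx hsol
      have hmono : phi w p (A' k j₀) (x j₀) ≤ phi w p (A k j₀) (x j₀) := by
        rw [hA'kj0]
        exact phi_zero_le _ _ (hA k j₀).1 (hx j₀).1
      apply le_antisymm
      · apply Finset.sup'_le
        intro j _
        by_cases hj : j = j₀
        · subst hj; exact hmono.trans hlt0.le
        · have : A' k j = A k j := by rw [hA']; simp [hj]
          rw [this, ← hsol k]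
          exact Finset.le_sup' (fun j => phi w p (A k j) (x j)) (Finset.mem_univ j)
      · obtain ⟨j₁, _, hj₁⟩ := Finset.exists_mem_eq_sup' (Finset.univ_nonempty (α := J))
          (fun j => phi w p (A k j) (x j))
        have hbk1 : b k = phi w p (A k j₁) (x j₁) := by rw [← hsol k, hj₁]
        have hne : j₁ ≠ j₀ := by
          intro h; subst h; exact absurd hbk1.symm (ne_of_lt hlt0)
        have hAeq : A' k j₁ = A k j₁ := by rw [hA']; simp [hne]
        calc b k = phi w p (A' k j₁) (x j₁) := by rw [hAeq, ← hbk1]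
          _ ≤ _ := Finset.le_sup' (fun j => phi w p (A' k j) (x j)) (Finset.mem_univ j₁)
    · have : (fun j => phi w p (A' i' j) (x j)) = fun j => phi w p (A i' j) (x j) := by
        funext j; rw [hA']; simp [hi']
      rw [this, hsol]
  · rintro ⟨hx, hsol⟩
    have hAi : A' i j₀ = A i j₀ := by rw [hA']; simp [hik]
    have hlt0 : phi w p (A k j₀) (x j₀) < b k := by
      apply key (x j₀) (hx j₀).1
      rw [← hsol i, ← hAi]
      exact Finset.le_sup' (fun j => phi w p (A' i j) (x j)) (Finset.mem_univ j₀)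
    have hmono : phi w p (A' k j₀) (x j₀) ≤ phi w p (A k j₀) (x j₀) := by
      rw [hA'kj0]
      exact phi_zero_le _ _ (hA k j₀).1 (hx j₀).1
    refine ⟨hx, fun i' => ?_⟩
    by_cases hi' : i' = k
    · rw [hi']
      apply le_antisymm
      · apply Finset.sup'_le
        intro j _
        by_cases hj : j = j₀
        · subst hj; exact hlt0.le
        · have : A' k j = A k j := by rw [hA']; simp [hj]
          rw [← this, ← hsol k]
          exact Finset.le_sup' (fun j => phi w p (A' k j) (x j)) (Finset.mem_univ j)
      · obtain ⟨j₁, _, hj₁⟩ := Finset.exists_mem_eq_sup' (Finset.univ_nonempty (α := J))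
          (fun j => phi w p (A' k j) (x j))
        have hbk1 : b k = phi w p (A' k j₁) (x j₁) := by rw [← hsol k, hj₁]
        have hne : j₁ ≠ j₀ := by
          intro h; subst h
          exact absurd hbk1.symm (ne_of_lt (lt_of_le_of_lt hmono hlt0))
        have hAeq : A' k j₁ = A k j₁ := by rw [hA']; simp [hne]
        calc b k = phi w p (A k j₁) (x j₁) := by rw [← hAeq, ← hbk1]
          _ ≤ _ := Finset.le_sup' (fun j => phi w p (A k j) (x j)) (Finset.mem_univ j₁)
    · have : (fun j => phi w p (A' i' j) (x j)) = fun j => phi w p (A i' j) (x j) := by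
        funext j; rw [hA']; simp [hi']
      rw [← this]; exact hsol i'
end

section
/- Let S = ⋃_{e∈E} [L(e), U] ⊆ [0,1]^J be a nonempty union of componentwise order intervals with common upper bound U, and let c : J → ℝ. Suppose U minimizes x ↦ Σ_j min(c_j,0)·x_j over S and L(e*) minimizes x ↦ Σ_j max(c_j,0)·x_j over S for some e* ∈ E. Define x*_j = U_j if c_j < 0 and x*_j = L(e*)_j if c_j ≥ 0. Then x* ∈ S and x* minimizes x ↦ Σ_j c_j·x_j over S. -/
open scoped Classical

theorem stmt16 {J E : Type*} [Fintype J] [Fintype E] [Nonempty E]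
    (L : E → (J → ℝ)) (U : J → ℝ)
    (hL : ∀ e, L e ∈ Set.Icc (0 : J → ℝ) 1) (hU : U ∈ Set.Icc (0 : J → ℝ) 1)
    (hLU : ∀ e, L e ≤ U)
    (S : Set (J → ℝ)) (hS : S = ⋃ e : E, Set.Icc (L e) U)
    (c : J → ℝ)
    (hU_opt : ∀ x ∈ S, ∑ j, min (c j) 0 * U j ≤ ∑ j, min (c j) 0 * x j)
    (estar : E)
    (hL_opt : ∀ x ∈ S, ∑ j, max (c j) 0 * L estar j ≤ ∑ j, max (c j) 0 * x j) :
    (fun j => if c j < 0 then U j else L estar j) ∈ S ∧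
    ∀ x ∈ S, ∑ j, c j * (if c j < 0 then U j else L estar j) ≤ ∑ j, c j * x j := by
  constructor
  · rw [hS]
    refine Set.mem_iUnion.2 ⟨estar, ?_, ?_⟩
    · intro j
      by_cases h : c j < 0 <;> simp [h, hLU estar j, le_refl]
    · intro j
      by_cases h : c j < 0 <;> simp [h, hLU estar j, le_refl]
  · intro x hx
    have key : ∀ y : ℝ, ∀ j, c j * (if c j < 0 then U j else L estar j) =
        min (c j) 0 * U j + max (c j) 0 * L estar j := by
      intro y j
      rcases lt_or_ge (c j) 0 with h | h
      · simp [h, min_eq_left h.le, max_eq_right h.le]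
      · simp [not_lt.2 h, min_eq_right h, max_eq_left h]
    have key2 : ∀ j, c j * x j = min (c j) 0 * x j + max (c j) 0 * x j := by
      intro j
      rw [← add_mul, min_add_max]; ring
    calc ∑ j, c j * (if c j < 0 then U j else L estar j)
        = ∑ j, (min (c j) 0 * U j + max (c j) 0 * L estar j) := by
          exact Finset.sum_congr rfl fun j _ => key 0 j
      _ = (∑ j, min (c j) 0 * U j) + ∑ j, max (c j) 0 * L estar j := Finset.sum_add_distrib
      _ ≤ (∑ j, min (c j) 0 * x j) + ∑ j, max (c j) 0 * x j :=
          add_le_add (hU_opt x hx) (hL_opt x hx)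
      _ = ∑ j, c j * x j := by
          rw [← Finset.sum_add_distrib]
          exact Finset.sum_congr rfl fun j _ => (key2 j).symm
end
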